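/- arXiv:1008.1737 — 2 statements merged into one kernel-verified Lean document; each statement's English description precedes it below -/
import Mathlib

section
/- Let (R, m, k) be a commutative noetherian local ring with Hilbert series 1 + eτ + (e−1)τ², e ≥ 2. If w and x are elements of R satisfying wx = 0, wm = m², and xm = m², then w and x form an exact pair of zero divisors in R. -/
/-!
Multiplication by `x` maps `m` onto `x m = m²`, and its kernel is `ann x`, which lies in `m`
because `x ≠ 0`. Hence `ℓ(ann x) = ℓ(m) - ℓ(m²) = (2e - 1) - (e - 1) = e`, and likewise
`ℓ(ann w) = e`. Since `(w) ≅ R / ann w`, also `ℓ((w)) = 2e - e = e`; so the inclusion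
`(w) ⊆ ann x` is between ideals of the same finite length, hence an equality.
-/

/-- The (composition) length of an `R`-module. -/
noncomputable def moduleLength (R : Type u) [CommRing R] (M : Type v)
    [AddCommGroup M] [Module R M] : WithBot ℕ∞ :=
  Order.krullDim (Submodule R M)

/-- The annihilator of an element of `R` as an ideal. -/
def annIdeal (R : Type u) [CommRing R] (a : R) : Ideal R :=
  LinearMap.ker (LinearMap.mulLeft R a)

open IsLocalRing

lemma length_eq_of_moduleLength_eq {R M : Type*} [CommRing R] [AddCommGroup M] [Module R M]
    {n : ℕ} (h : moduleLength R M = n) : Module.length R M = n := by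
  rw [moduleLength, ← Module.coe_length] at h
  exact_mod_cast h

lemma Submodule.eq_of_le_of_length_eq {R M : Type*} [Ring R] [AddCommGroup M] [Module R M]
    {N N' : Submodule R M} (hle : N ≤ N') (hlen : Module.length R N = Module.length R N')
    (hfin : Module.length R N ≠ ⊤) : N = N' := by
  refine hle.eq_of_not_lt fun hlt => ?_
  simp only [Module.length_submodule] at hlen hfin
  exact (Order.height_strictMono hlt hfin.lt_top).ne hlen

section annIdeal

variable {R : Type*} [CommRing R]

@[simp]
lemma mem_annIdeal {x a : R} : a ∈ annIdeal R x ↔ x * a = 0 := Iff.rfl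

lemma span_singleton_le_annIdeal {w x : R} (hwx : w * x = 0) :
    Ideal.span {w} ≤ annIdeal R x :=
  Ideal.span_le.mpr <| Set.singleton_subset_iff.mpr <| by
    rw [SetLike.mem_coe, mem_annIdeal, mul_comm, hwx]

lemma annIdeal_le_maximalIdeal [IsLocalRing R] {x : R} (hx : x ≠ 0) :
    annIdeal R x ≤ maximalIdeal R :=
  le_maximalIdeal fun h => hx <| by simpa using (annIdeal R x).eq_top_iff_one.mp h

lemma length_annIdeal_add_length_span_mul {x : R} {J : Ideal R} (hJ : annIdeal R x ≤ J) :
    Module.length R (annIdeal R x) + Module.length R ↥(Ideal.span {x} * J) =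
      Module.length R J := by
  let g : J →ₗ[R] ↥(Ideal.span {x} * J) :=
    ((LinearMap.mulLeft R x).comp J.subtype).codRestrict _ fun y =>
      show x * (y : R) ∈ _ from Ideal.mul_mem_mul (Ideal.mem_span_singleton_self x) y.2
  have hg : Function.Surjective g := by
    rintro ⟨z, hz⟩
    obtain ⟨y, hy, rfl⟩ := Ideal.mem_span_singleton_mul.mp hz
    exact ⟨⟨y, hy⟩, rfl⟩
  have hker : LinearMap.ker g = Submodule.comap J.subtype (annIdeal R x) := by
    ext y
    exact Subtype.ext_iff
  rw [Module.length_eq_add_of_exact _ g (LinearMap.ker g).injective_subtype hg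
    (LinearMap.exact_subtype_ker_map g), hker, (Submodule.comapSubtypeEquivOfLe hJ).length_eq]

lemma length_maximalIdeal_add_one [IsLocalRing R] :
    Module.length R (maximalIdeal R) + 1 = Module.length R R := by
  have : IsSimpleModule R (R ⧸ maximalIdeal R) :=
    isSimpleModule_iff_isCoatom.mpr (maximalIdeal.isMaximal R).out
  rw [Module.length_eq_add_of_exact _ _ (maximalIdeal R).injective_subtype
    (maximalIdeal R).mkQ_surjective (LinearMap.exact_subtype_mkQ _),
    Module.length_eq_one R (R ⧸ maximalIdeal R)]

lemma length_span_singleton_of_length_annIdeal {e : ℕ} (hR : Module.length R R = (2 * e : ℕ))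
    {w : R} (hw : Module.length R (annIdeal R w) = e) :
    Module.length R (Ideal.span {w}) = e := by
  have hsum := length_annIdeal_add_length_span_mul (le_top (a := annIdeal R w))
  rw [Ideal.mul_top, Module.length_top, hR, hw, two_mul, Nat.cast_add] at hsum
  exact ENat.add_right_injective_of_ne_top (ENat.natCast_ne_top _) hsum

end annIdeal

section LocalRing

variable {R : Type*} [CommRing R] [IsLocalRing R]

lemma ne_zero_of_span_singleton_mul_maximalIdeal_eq (hm2 : maximalIdeal R ^ 2 ≠ ⊥) {x : R}
    (hx : Ideal.span {x} * maximalIdeal R = maximalIdeal R ^ 2) : x ≠ 0 := by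
  rintro rfl
  simp [← hx] at hm2

lemma not_isUnit_of_span_singleton_mul_maximalIdeal_eq (h3 : maximalIdeal R ^ 3 = ⊥)
    (hm2 : maximalIdeal R ^ 2 ≠ ⊥) {x : R}
    (hx : Ideal.span {x} * maximalIdeal R = maximalIdeal R ^ 2) : ¬IsUnit x := by
  intro hu
  rw [Ideal.span_singleton_eq_top.mpr hu, Ideal.top_mul] at hx
  apply hm2
  calc maximalIdeal R ^ 2 = maximalIdeal R * maximalIdeal R := pow_two _
    _ = maximalIdeal R * maximalIdeal R ^ 2 := by rw [← hx]
    _ = ⊥ := by rw [← pow_succ', h3]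

lemma length_annIdeal_of_span_singleton_mul_maximalIdeal_eq {e : ℕ} (he : 1 ≤ e)
    (hR : Module.length R R = (2 * e : ℕ))
    (hm2 : Module.length R ↥(maximalIdeal R ^ 2) = (e - 1 : ℕ)) {x : R} (hx0 : x ≠ 0)
    (hx : Ideal.span {x} * maximalIdeal R = maximalIdeal R ^ 2) :
    Module.length R (annIdeal R x) = e := by
  have hm : Module.length R (maximalIdeal R) = (e + (e - 1) : ℕ) := by
    refine ENat.add_left_injective_of_ne_top ENat.one_ne_top ?_
    dsimp only
    rw [length_maximalIdeal_add_one, hR]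
    norm_cast
    omega
  have hsum := length_annIdeal_add_length_span_mul (annIdeal_le_maximalIdeal hx0)
  rw [hx, hm2, hm, Nat.cast_add] at hsum
  exact ENat.add_left_injective_of_ne_top (ENat.natCast_ne_top _) hsum

lemma annIdeal_eq_span_singleton_of_length {e : ℕ} (he : 1 ≤ e)
    (hR : Module.length R R = (2 * e : ℕ))
    (hm2 : Module.length R ↥(maximalIdeal R ^ 2) = (e - 1 : ℕ)) {w x : R} (hwx : w * x = 0)
    (hw0 : w ≠ 0) (hx0 : x ≠ 0)
    (hw : Ideal.span {w} * maximalIdeal R = maximalIdeal R ^ 2)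
    (hx : Ideal.span {x} * maximalIdeal R = maximalIdeal R ^ 2) :
    annIdeal R x = Ideal.span {w} := by
  have hann := length_annIdeal_of_span_singleton_mul_maximalIdeal_eq he hR hm2 hx0 hx
  have hspan := length_span_singleton_of_length_annIdeal hR
    (length_annIdeal_of_span_singleton_mul_maximalIdeal_eq he hR hm2 hw0 hw)
  refine (Submodule.eq_of_le_of_length_eq (span_singleton_le_annIdeal hwx) ?_ ?_).symm
  · rw [hspan, hann]
  · rw [hspan]
    exact ENat.natCast_ne_top e

end LocalRing

theorem stmt6_general (R : Type u) [CommRing R] [IsLocalRing R]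
    (e : ℕ) (he : 2 ≤ e)
    (h3 : (IsLocalRing.maximalIdeal R) ^ 3 = ⊥)
    (hR : moduleLength R R = ((2 * e : ℕ) : WithBot ℕ∞))
    (hm2 : moduleLength R (↥((IsLocalRing.maximalIdeal R) ^ 2)) = ((e - 1 : ℕ) : WithBot ℕ∞))
    (w x : R) (hwx : w * x = 0)
    (hw : Ideal.span {w} * IsLocalRing.maximalIdeal R = (IsLocalRing.maximalIdeal R) ^ 2)
    (hx : Ideal.span {x} * IsLocalRing.maximalIdeal R = (IsLocalRing.maximalIdeal R) ^ 2) :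
    x ≠ 0 ∧ ¬ IsUnit x ∧ w ≠ 0 ∧ ¬ IsUnit w ∧
    annIdeal R x = Ideal.span {w} ∧ annIdeal R w = Ideal.span {x} := by
  have hRlen := length_eq_of_moduleLength_eq hR
  have hm2len := length_eq_of_moduleLength_eq hm2
  have hm2ne : maximalIdeal R ^ 2 ≠ ⊥ := by
    intro h
    rw [h, Module.length_bot] at hm2len
    norm_cast at hm2len
    omega
  have hx0 := ne_zero_of_span_singleton_mul_maximalIdeal_eq hm2ne hx
  have hw0 := ne_zero_of_span_singleton_mul_maximalIdeal_eq hm2ne hw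
  exact ⟨hx0, not_isUnit_of_span_singleton_mul_maximalIdeal_eq h3 hm2ne hx,
    hw0, not_isUnit_of_span_singleton_mul_maximalIdeal_eq h3 hm2ne hw,
    annIdeal_eq_span_singleton_of_length (by omega) hRlen hm2len hwx hw0 hx0 hw hx,
    annIdeal_eq_span_singleton_of_length (by omega) hRlen hm2len (mul_comm x w ▸ hwx)
      hx0 hw0 hx hw⟩

/-- let `(R, m, k)` be a commutative noetherian local ring with
Hilbert series `1 + eτ + (e-1)τ²` (encoded by: `m³ = 0`, `length R = 2e`,
`length m² = e - 1`), `e ≥ 2`.  If `wx = 0`, `wm = m²` and `xm = m²`, then `w`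
and `x` form an exact pair of zero divisors. -/
theorem stmt6 (R : Type u) [CommRing R] [IsNoetherianRing R] [IsLocalRing R]
    (e : ℕ) (he : 2 ≤ e)
    (h3 : (IsLocalRing.maximalIdeal R) ^ 3 = ⊥)
    (hR : moduleLength R R = ((2 * e : ℕ) : WithBot ℕ∞))
    (hm2 : moduleLength R (↥((IsLocalRing.maximalIdeal R) ^ 2)) = ((e - 1 : ℕ) : WithBot ℕ∞))
    (w x : R) (hwx : w * x = 0)
    (hw : Ideal.span {w} * IsLocalRing.maximalIdeal R = (IsLocalRing.maximalIdeal R) ^ 2)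
    (hx : Ideal.span {x} * IsLocalRing.maximalIdeal R = (IsLocalRing.maximalIdeal R) ^ 2) :
    x ≠ 0 ∧ ¬ IsUnit x ∧ w ≠ 0 ∧ ¬ IsUnit w ∧
    annIdeal R x = Ideal.span {w} ∧ annIdeal R w = Ideal.span {x} :=
  stmt6_general R e he h3 hR hm2 w x hwx hw hx
end

section
/- Let (R, m) be a commutative noetherian local ring with m³ = 0 and embedding dimension e ≥ 2, and suppose w and x form an exact pair of zero divisors in R. Then x is a minimal generator of m (x ∈ m \ m²), xm = m², the length of the ideal (x) equals e, and dim_k(m²) = e − 1. -/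
/-!
Since `w m² ⊆ m³ = 0`, we get `m² ⊆ ann w = (x)`; and `x ∉ m²`, for otherwise `m ⊆ ann x = (w)`
would make `m` principal, against `e ≥ 2`. As `m (x) ⊆ m²`, the inclusion `m² ⊂ (x)` is then a
covering, so `ℓ(x) = ℓ(m²) + 1`, and symmetrically `ℓ(w) = ℓ(m²) + 1`. Computing `ℓ(R)` once along
`0 → (w) → R → (x) → 0` (multiplication by `x`) and once along `m² ⊂ m ⊂ R` gives
`2 (ℓ(m²) + 1) = ℓ(R) = ℓ(m²) + e + 1`, so `ℓ(m²) = e - 1` and `ℓ(x) = e`.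
-/

open IsLocalRing Module

lemma moduleLength_eq_length (R : Type*) [CommRing R] (M : Type*) [AddCommGroup M]
    [Module R M] : moduleLength R M = length R M :=
  (coe_length R M).symm

lemma CovBy.length_eq_length_add_one {R M : Type*} [Ring R] [AddCommGroup M] [Module R M]
    {p q : Submodule R M} (h : p ⋖ q) : length R q = length R p + 1 := by
  let f := Submodule.inclusion h.le
  have : IsSimpleModule R (q ⧸ LinearMap.range f) := by
    rwa [Submodule.range_inclusion, ← covBy_iff_quot_is_simple h.le]
  rw [length_eq_add_of_exact f (LinearMap.range f).mkQ (Submodule.inclusion_injective _)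
    (Submodule.mkQ_surjective _) (LinearMap.exact_map_mkQ_range f),
    length_eq_one R (q ⧸ LinearMap.range f)]

lemma Ideal.length_eq_length_sq_add_length_cotangent {R : Type*} [CommRing R] (I : Ideal R) :
    length R I = length R ↥(I ^ 2) + length R I.Cotangent := by
  refine length_eq_add_of_exact (Submodule.inclusion (Ideal.pow_le_self two_ne_zero))
    I.toCotangent (Submodule.inclusion_injective _) I.toCotangent_surjective ?_
  rw [LinearMap.exact_iff, Submodule.range_inclusion]
  ext y
  exact I.mem_toCotangent_ker

lemma mem_annIdeal_iff {R : Type*} [CommRing R] {a r : R} : r ∈ annIdeal R a ↔ a * r = 0 := by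
  simp [annIdeal]

lemma length_eq_length_annIdeal_add_length_span {R : Type*} [CommRing R] (x : R) :
    length R R = length R (annIdeal R x) + length R (Ideal.span {x}) := by
  let mulX : R →ₗ[R] Ideal.span {x} := LinearMap.codRestrict _ (LinearMap.mulLeft R x)
    fun r ↦ Ideal.mul_mem_right r _ (Ideal.mem_span_singleton_self x)
  refine length_eq_add_of_exact (annIdeal R x).subtype mulX (Submodule.subtype_injective _) ?_ ?_
  · rintro ⟨y, hy⟩
    obtain ⟨a, rfl⟩ := Ideal.mem_span_singleton'.mp hy
    exact ⟨a, Subtype.ext (mul_comm x a)⟩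
  · rw [LinearMap.exact_iff, Submodule.range_subtype]
    ext r
    exact Submodule.mk_eq_zero _ _

section LocalRing

variable {R : Type*} [CommRing R] [IsLocalRing R]

lemma length_eq_length_maximalIdeal_add_one : length R R = length R (maximalIdeal R) + 1 := by
  rw [← length_top,
    (Ideal.isMaximal_def.mp (maximalIdeal.isMaximal R)).covBy_top.length_eq_length_add_one]

lemma length_cotangentSpace [IsNoetherianRing R] :
    length R (CotangentSpace R) = finrank (ResidueField R) (CotangentSpace R) := by
  rw [← length_eq_finrank, length_eq_of_surjective residue_surjective]

lemma Ideal.covBy_span_singleton {I : Ideal R} {x : R} (hxI : x ∉ I) (hI : I ≤ Ideal.span {x})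
    (hmx : ∀ a ∈ maximalIdeal R, a * x ∈ I) : I ⋖ Ideal.span {x} := by
  refine ⟨lt_of_le_of_ne hI fun h ↦ hxI (h ▸ Ideal.mem_span_singleton_self x), fun J hIJ hJx ↦ ?_⟩
  obtain ⟨y, hyJ, hyI⟩ := SetLike.exists_of_lt hIJ
  obtain ⟨a, rfl⟩ := Ideal.mem_span_singleton'.mp (hJx.le hyJ)
  have ha : IsUnit a := notMem_maximalIdeal.mp fun ha ↦ hyI (hmx a ha)
  have hxJ : x ∈ J := (J.unit_mul_mem_iff_mem ha).mp hyJ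
  exact hJx.not_ge ((Ideal.span_singleton_le_iff_mem J).mpr hxJ)

lemma length_span_singleton_eq_length_sq_add_one {x : R} (hx : x ∈ maximalIdeal R)
    (hx2 : x ∉ maximalIdeal R ^ 2) (hm2 : maximalIdeal R ^ 2 ≤ Ideal.span {x}) :
    length R (Ideal.span {x}) = length R ↥(maximalIdeal R ^ 2) + 1 :=
  (Ideal.covBy_span_singleton hx2 hm2 fun _ ha ↦
    sq (maximalIdeal R) ▸ Ideal.mul_mem_mul ha hx).length_eq_length_add_one

lemma span_singleton_mul_maximalIdeal_eq_sq {x : R} (hx : x ∈ maximalIdeal R)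
    (hx2 : x ∉ maximalIdeal R ^ 2) (hm2 : maximalIdeal R ^ 2 ≤ Ideal.span {x}) :
    Ideal.span {x} * maximalIdeal R = maximalIdeal R ^ 2 := by
  refine le_antisymm (sq (maximalIdeal R) ▸ Ideal.mul_mono_left
    ((Ideal.span_singleton_le_iff_mem _).mpr hx)) fun y hy ↦ ?_
  obtain ⟨a, rfl⟩ := Ideal.mem_span_singleton'.mp (hm2 hy)
  have ha : a ∈ maximalIdeal R := by
    by_contra ha
    exact hx2 ((Ideal.unit_mul_mem_iff_mem _ (notMem_maximalIdeal.mp ha)).mp hy)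
  rw [mul_comm a x]
  exact Ideal.mul_mem_mul (Ideal.mem_span_singleton_self x) ha

lemma mul_eq_zero_of_mem_of_mem_sq (h3 : maximalIdeal R ^ 3 = ⊥) {a b : R}
    (ha : a ∈ maximalIdeal R) (hb : b ∈ maximalIdeal R ^ 2) : a * b = 0 := by
  have hab : a * b ∈ maximalIdeal R ^ 3 :=
    pow_succ' (maximalIdeal R) 2 ▸ Ideal.mul_mem_mul ha hb
  rwa [h3, Ideal.mem_bot] at hab

lemma sq_le_span_of_annIdeal_eq (h3 : maximalIdeal R ^ 3 = ⊥) {w x : R}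
    (hw : w ∈ maximalIdeal R) (h : annIdeal R w = Ideal.span {x}) :
    maximalIdeal R ^ 2 ≤ Ideal.span {x} :=
  h ▸ fun _ hy ↦ mem_annIdeal_iff.mpr (mul_eq_zero_of_mem_of_mem_sq h3 hw hy)

lemma maximalIdeal_eq_span_of_annIdeal_eq (h3 : maximalIdeal R ^ 3 = ⊥) {w x : R}
    (hw : w ∈ maximalIdeal R) (hx : x ∈ maximalIdeal R ^ 2)
    (h : annIdeal R x = Ideal.span {w}) : maximalIdeal R = Ideal.span {w} :=
  le_antisymm
    (h ▸ fun y hy ↦ mem_annIdeal_iff.mpr (mul_comm y x ▸ mul_eq_zero_of_mem_of_mem_sq h3 hy hx))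
    ((Ideal.span_singleton_le_iff_mem _).mpr hw)

lemma notMem_sq_of_annIdeal_eq [IsNoetherianRing R]
    (hdim : 1 < finrank (ResidueField R) (CotangentSpace R)) (h3 : maximalIdeal R ^ 3 = ⊥)
    {w x : R} (hw : w ∈ maximalIdeal R) (h : annIdeal R x = Ideal.span {w}) :
    x ∉ maximalIdeal R ^ 2 := fun hx ↦
  hdim.not_ge <| finrank_cotangentSpace_le_one_iff.mpr
    ⟨⟨w, maximalIdeal_eq_span_of_annIdeal_eq h3 hw hx h⟩⟩

end LocalRing

theorem stmt7_general (R : Type u) [CommRing R] [IsNoetherianRing R] [IsLocalRing R]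
    (e : ℕ) (he : 2 ≤ e)
    (hdim : Module.finrank (IsLocalRing.ResidueField R) (IsLocalRing.CotangentSpace R) = e)
    (h3 : (IsLocalRing.maximalIdeal R) ^ 3 = ⊥)
    (w x : R) (hxu : ¬ IsUnit x) (hwu : ¬ IsUnit w)
    (h1 : annIdeal R x = Ideal.span {w}) (h2 : annIdeal R w = Ideal.span {x}) :
    x ∈ IsLocalRing.maximalIdeal R ∧ x ∉ (IsLocalRing.maximalIdeal R) ^ 2 ∧
    Ideal.span {x} * IsLocalRing.maximalIdeal R = (IsLocalRing.maximalIdeal R) ^ 2 ∧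
    moduleLength R (↥(Ideal.span {x})) = ((e : ℕ) : WithBot ℕ∞) ∧
    moduleLength R (↥((IsLocalRing.maximalIdeal R) ^ 2)) = ((e - 1 : ℕ) : WithBot ℕ∞) := by
  have hxm : x ∈ maximalIdeal R := hxu
  have hwm : w ∈ maximalIdeal R := hwu
  have hx2 := notMem_sq_of_annIdeal_eq (hdim ▸ he) h3 hwm h1
  have hw2 := notMem_sq_of_annIdeal_eq (hdim ▸ he) h3 hxm h2
  have hm2x := sq_le_span_of_annIdeal_eq h3 hwm h2
  have hm2w := sq_le_span_of_annIdeal_eq h3 hxm h1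
  have : IsArtinianRing R := (isArtinianRing_iff_isNilpotent_maximalIdeal R).mpr ⟨3, h3⟩
  obtain ⟨c, hc⟩ := ENat.ne_top_iff_exists.mp (length_ne_top (R := R) (M := ↥(maximalIdeal R ^ 2)))
  have hlen_max : length R R = c + e + 1 := by
    rw [length_eq_length_maximalIdeal_add_one,
      (maximalIdeal R).length_eq_length_sq_add_length_cotangent, length_cotangentSpace, hdim, hc]
  have hlen_ann : length R R = (c + 1) + (c + 1) := by
    rw [length_eq_length_annIdeal_add_length_span x, h1,
      length_span_singleton_eq_length_sq_add_one hwm hw2 hm2w,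
      length_span_singleton_eq_length_sq_add_one hxm hx2 hm2x, hc]
  have hce : e = c + 1 := by
    have := hlen_max.symm.trans hlen_ann
    norm_cast at this
    omega
  refine ⟨hxm, hx2, span_singleton_mul_maximalIdeal_eq_sq hxm hx2 hm2x, ?_, ?_⟩
  · rw [moduleLength_eq_length, length_span_singleton_eq_length_sq_add_one hxm hx2 hm2x, ← hc,
      hce]
    norm_cast
  · rw [moduleLength_eq_length, ← hc, hce, Nat.add_sub_cancel]
    norm_cast

/-- let `(R, m)` be a commutative noetherian local ring with
`m³ = 0` and embedding dimension `e ≥ 2`, and suppose `w, x` form an exact pair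
of zero divisors.  Then `x ∈ m \ m²`, `xm = m²`, the ideal `(x)` has length
`e`, and `dim_k m² = e - 1` (expressed as the length of `m²`). -/
theorem stmt7 (R : Type u) [CommRing R] [IsNoetherianRing R] [IsLocalRing R]
    (e : ℕ) (he : 2 ≤ e)
    (hdim : Module.finrank (IsLocalRing.ResidueField R) (IsLocalRing.CotangentSpace R) = e)
    (h3 : (IsLocalRing.maximalIdeal R) ^ 3 = ⊥)
    (w x : R) (hx0 : x ≠ 0) (hxu : ¬ IsUnit x) (hw0 : w ≠ 0) (hwu : ¬ IsUnit w)
    (h1 : annIdeal R x = Ideal.span {w}) (h2 : annIdeal R w = Ideal.span {x}) :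
    x ∈ IsLocalRing.maximalIdeal R ∧ x ∉ (IsLocalRing.maximalIdeal R) ^ 2 ∧
    Ideal.span {x} * IsLocalRing.maximalIdeal R = (IsLocalRing.maximalIdeal R) ^ 2 ∧
    moduleLength R (↥(Ideal.span {x})) = ((e : ℕ) : WithBot ℕ∞) ∧
    moduleLength R (↥((IsLocalRing.maximalIdeal R) ^ 2)) = ((e - 1 : ℕ) : WithBot ℕ∞) :=
  stmt7_general R e he hdim h3 w x hxu hwu h1 h2
end
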